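/- In Berlinkov's automaton A(ψ), the shortest word sending the state q_{m+1,1} to the zero state z₀ has length exactly n + 1. -/
import Mathlib


/-- The three-letter alphabet {a, b, c}. -/
inductive Letter3 where
  | a | b | c
deriving DecidableEq

/-- Extension of a transition function to words (left-to-right action). -/
def runW {Q A : Type*} (δ : Q → A → Q) : Q → List A → Q
  | q, [] => q
  | q, x :: w => runW δ (δ q x) w

/-- States of Berlinkov's automaton A(ψ) for a SAT instance with m clauses and n
variables.  `q i j` encodes q_{i+1,j+1} (so `q ⟨m⟩ ⟨n⟩` is the state z₁),
`p i j` encodes p_{i+1,j+1}, and `z0` is the zero state. -/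
inductive St (m n : ℕ) where
  | q : Fin (m + 1) → Fin (n + 1) → St m n
  | p : Fin (m + 1) → Fin (n + 1) → St m n
  | z0 : St m n
deriving DecidableEq

/-- The transition function of Berlinkov's automaton A(ψ).  `pos i j` means the
literal x_{j+1} occurs in clause c_{i+1}; `neg i j` means ¬x_{j+1} occurs there. -/
def St.delta {m n : ℕ} (pos neg : Fin m → Fin n → Bool) : St m n → Letter3 → St m n
  | .q i j, .a =>
      if hj : (j : ℕ) < n then
        if hi : (i : ℕ) < m then
          if pos ⟨i, hi⟩ ⟨j, hj⟩ then .z0 else .q i ⟨(j : ℕ) + 1, by omega⟩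
        else .q i ⟨(j : ℕ) + 1, by omega⟩
      else if (i : ℕ) < m then .z0 else .q i ⟨0, by omega⟩
  | .q i j, .b =>
      if hj : (j : ℕ) < n then
        if hi : (i : ℕ) < m then
          if neg ⟨i, hi⟩ ⟨j, hj⟩ then .z0 else .q i ⟨(j : ℕ) + 1, by omega⟩
        else .q i ⟨(j : ℕ) + 1, by omega⟩
      else if (i : ℕ) < m then .z0 else .q i ⟨0, by omega⟩
  | .q i j, .c =>
      if (j : ℕ) < n then .q i ⟨0, by omega⟩
      else if (i : ℕ) < m then .q ⟨m, by omega⟩ ⟨0, by omega⟩ else .z0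
  | .p i j, x =>
      if hj : (j : ℕ) < n then .p i ⟨(j : ℕ) + 1, by omega⟩
      else match x with
        | .c => .q i ⟨0, by omega⟩
        | _ => .z0
  | .z0, _ => .z0

/-- Clause c_{i+1} is satisfied by the truth assignment τ. -/
def clauseSat {m n : ℕ} (pos neg : Fin m → Fin n → Bool) (τ : Fin n → Bool) (i : Fin m) : Prop :=
  ∃ j : Fin n, (pos i j = true ∧ τ j = true) ∨ (neg i j = true ∧ τ j = false)

/-- The word v(τ) ∈ {a,b}ⁿ encoding a truth assignment. -/
def encWord {n : ℕ} (τ : Fin n → Bool) : List Letter3 :=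
  List.ofFn fun j : Fin n => if τ j then Letter3.a else Letter3.b

lemma delta_qm_a {m n : ℕ} (pos neg : Fin m → Fin n → Bool) (j : Fin (n+1)) (hj : (j:ℕ) < n) :
    St.delta pos neg (St.q ⟨m, Nat.lt_succ_self m⟩ j) Letter3.a
      = St.q ⟨m, Nat.lt_succ_self m⟩ ⟨(j:ℕ)+1, by omega⟩ := by
  simp [St.delta, hj]

lemma run_a_rep {m n : ℕ} (pos neg : Fin m → Fin n → Bool) :
    ∀ k (j : Fin (n+1)), (j:ℕ) + k = n →
      runW (St.delta pos neg) (St.q ⟨m, Nat.lt_succ_self m⟩ j) (List.replicate k Letter3.a)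
        = St.q ⟨m, Nat.lt_succ_self m⟩ ⟨n, Nat.lt_succ_self n⟩ := by
  intro k
  induction k with
  | zero =>
      intro j hj
      have hje : j = ⟨n, Nat.lt_succ_self n⟩ := by ext; simpa using hj
      simp [runW, hje]
  | succ k ih =>
      intro j hj
      have hjn : (j:ℕ) < n := by omega
      simp only [List.replicate_succ, runW, delta_qm_a pos neg j hjn]
      exact ih _ (by simp; omega)

lemma lower_bound {m n : ℕ} (pos neg : Fin m → Fin n → Bool) :
    ∀ u : List Letter3, ∀ j : Fin (n+1),
      runW (St.delta pos neg) (St.q ⟨m, Nat.lt_succ_self m⟩ j) u = St.z0 →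
      n - (j:ℕ) + 1 ≤ u.length := by
  intro u
  induction u with
  | nil => intro j h; simp [runW] at h
  | cons x u ih =>
      intro j h
      by_cases hj : (j:ℕ) < n
      · -- letter moves to q m j' with j' = j+1 (a,b) or 0 (c)
        cases x with
        | a =>
            rw [runW, delta_qm_a pos neg j hj] at h
            have := ih _ h
            simp at this ⊢
            omega
        | b =>
            rw [runW] at h
            have hb : St.delta pos neg (St.q ⟨m, Nat.lt_succ_self m⟩ j) Letter3.b
                = St.q ⟨m, Nat.lt_succ_self m⟩ ⟨(j:ℕ)+1, by omega⟩ := by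
              simp [St.delta, hj]
            rw [hb] at h
            have := ih _ h
            simp at this ⊢
            omega
        | c =>
            rw [runW] at h
            have hc : St.delta pos neg (St.q ⟨m, Nat.lt_succ_self m⟩ j) Letter3.c
                = St.q ⟨m, Nat.lt_succ_self m⟩ ⟨0, Nat.succ_pos n⟩ := by
              simp [St.delta, hj]
            rw [hc] at h
            have := ih _ h
            simp at this ⊢
            omega
      · simp
        omega

/-- The shortest word sending q_{m+1,1} to the zero state z₀ has length exactly n+1. -/
theorem shortest_path_qm1_to_zero
    {m n : ℕ} (pos neg : Fin m → Fin n → Bool) :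
    IsLeast {k : ℕ | ∃ u : List Letter3, u.length = k ∧
        runW (St.delta pos neg) (St.q ⟨m, Nat.lt_succ_self m⟩ ⟨0, Nat.succ_pos n⟩) u = St.z0}
      (n + 1) := by
  constructor
  · refine ⟨List.replicate n Letter3.a ++ [Letter3.c], by simp, ?_⟩
    have hsplit : ∀ (s : St m n) (v w : List Letter3),
        runW (St.delta pos neg) s (v ++ w) = runW (St.delta pos neg) (runW (St.delta pos neg) s v) w := by
      intro s v
      induction v generalizing s with
      | nil => simp [runW]
      | cons x v ihv => intro w; simp [runW, ihv]
    rw [hsplit, run_a_rep pos neg n ⟨0, Nat.succ_pos n⟩ (by simp)]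
    simp [runW, St.delta]
  · rintro k ⟨u, hlen, hrun⟩
    have := lower_bound pos neg u ⟨0, Nat.succ_pos n⟩ hrun
    simp at this
    omega
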